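/- The substitution ν1 generates the 1-dimensional paperfolding structures: for every n ≥ 0 and every integer x with −2^n ≤ x < 2^n, the letter at 0-based index x + 2^n of the word ν1^n(a11 a00) (a word of length 2^{n+1}) equals a_{ij}, where i = 0 if the crease of S(n+2) at position x is +1 and i = 1 if it is −1, and j = 0 if x is even, j = 1 if x is odd. -/

import Mathlib

/-- The 4-letter alphabet `A = {a00, a01, a10, a11}` of the 1-dimensional
paperfolding substitution. -/
inductive PFA
  | a00 | a01 | a10 | a11
deriving DecidableEq

open PFA

/-- The 1-dimensional paperfolding substitution:
`ν1(a00) = a00 a11`, `ν1(a01) = a00 a01`, `ν1(a10) = a10 a11`,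
`ν1(a11) = a10 a01`. -/
def nu1 : PFA → List PFA
  | a00 => [a00, a11]
  | a01 => [a00, a01]
  | a10 => [a10, a11]
  | a11 => [a10, a01]

/-- Extension of `ν1` to words by concatenation. -/
def nu1W (w : List PFA) : List PFA := (w.map nu1).flatten

/-- The iterate `ν1^k(α)`, a word of length `2^k`. -/
def nu1Iter : ℕ → PFA → List PFA
  | 0, α => [α]
  | k + 1, α => nu1W (nu1Iter k α)

/-- Reflection of a word of creases: reverse and negate every sign. -/
def rPF (w : List ℤ) : List ℤ := (w.map (fun s => -s)).reverse

/-- The 1-dimensional paperfolding patterns: `S(0) = []` and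
`S(n+1) = r(S(n)) ++ [+1] ++ S(n)`; `S(n)` has length `2^n − 1` and its entry
at 0-based index `m` is the crease sign at integer position
`x = m − 2^(n−1) + 1`. -/
def SPF : ℕ → List ℤ
  | 0 => []
  | n + 1 => rPF (SPF n) ++ [1] ++ SPF n

/-!
The creases `c` of the paperfolding pattern satisfy `c(0) = 1`, `c(2x) = c(x)` and
`c(2x + 1) = -1` or `+1` according as `x` is even or odd; both recursions follow from
`S(m+1) = r(S(m)) ++ [+1] ++ S(m)` by induction on `m`, since the right half of `S(m+1)` is a
shifted copy of `S(m)` and the left half its reflection. On the other side, `ν1` sends the letter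
of `(c(x), x)` to the letters of `(c(2x), 2x)` and `(c(2x + 1), 2x + 1)`: the first letter keeps
the sign and becomes even, the second is odd with sign fixed by the parity of `x` alone. So
`ν1^(n+1)(a11 a00)` is read off `ν1^n(a11 a00)` exactly as `S(n+3)` is read off `S(n+2)`.
-/

lemma natCast_two_pow (m : ℕ) : ((2 ^ m : ℕ) : ℤ) = 2 ^ m := by push_cast; rfl

lemma rPF_length (w : List ℤ) : (rPF w).length = w.length := by simp [rPF]

lemma SPF_length (n : ℕ) : (SPF n).length = 2 ^ n - 1 := by
  induction n with
  | zero => rfl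
  | succ n ih =>
    have : 1 ≤ 2 ^ n := Nat.one_le_two_pow
    simp only [SPF, List.length_append, rPF_length, ih, List.length_singleton, pow_succ]
    omega

lemma eq_one_or_eq_neg_one_of_mem_SPF {n : ℕ} {s : ℤ} (hs : s ∈ SPF n) : s = 1 ∨ s = -1 := by
  induction n generalizing s with
  | zero => simp [SPF] at hs
  | succ n ih =>
    simp only [SPF, rPF, List.mem_append, List.mem_reverse, List.mem_map,
      List.mem_singleton] at hs
    rcases hs with (⟨t, ht, rfl⟩ | rfl) | hs
    · rcases ih ht with rfl | rfl <;> simp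
    · exact Or.inl rfl
    · exact ih hs

/-- The crease of `S(m+1)` at position `x`; it is meaningful for `|x| < 2^m` only, since
`toNat` sends negative indices to `0`. -/
def crease (m : ℕ) (x : ℤ) : Option ℤ := (SPF (m + 1))[(x + 2 ^ m - 1).toNat]?

lemma exists_crease_eq_some {m : ℕ} {x : ℤ} (h1 : -(2 ^ m) < x) (h2 : x < 2 ^ m) :
    ∃ s, (s = 1 ∨ s = -1) ∧ crease m x = some s := by
  have hlen : (x + 2 ^ m - 1).toNat < (SPF (m + 1)).length := by
    rw [SPF_length]
    have := natCast_two_pow (m + 1)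
    have : (2 : ℤ) ^ (m + 1) = 2 * 2 ^ m := pow_succ' 2 m
    omega
  exact ⟨_, eq_one_or_eq_neg_one_of_mem_SPF (List.getElem_mem hlen), List.getElem?_eq_getElem hlen⟩

lemma crease_zero (m : ℕ) : crease m 0 = some 1 := by
  have hidx : ((0 : ℤ) + 2 ^ m - 1).toNat = (rPF (SPF m)).length := by
    have := natCast_two_pow m
    rw [rPF_length, SPF_length]
    omega
  rw [crease, hidx, SPF, List.append_assoc, List.getElem?_append_right le_rfl, Nat.sub_self]
  rfl

lemma crease_succ_of_pos {m : ℕ} {x : ℤ} (h1 : 0 < x) (h2 : x < 2 ^ (m + 1)) :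
    crease (m + 1) x = crease m (x - 2 ^ m) := by
  have := natCast_two_pow m
  have := natCast_two_pow (m + 1)
  have : 2 ^ (m + 1) = 2 * 2 ^ m := pow_succ' 2 m
  have hlen : (rPF (SPF (m + 1)) ++ [1]).length = 2 ^ (m + 1) := by
    rw [List.length_append, rPF_length, SPF_length, List.length_singleton]
    omega
  rw [crease, SPF, List.getElem?_append_right (by omega), hlen, crease]
  congr 1
  omega

lemma crease_succ_of_neg {m : ℕ} {x : ℤ} (h1 : -(2 ^ (m + 1)) < x) (h2 : x < 0) :
    crease (m + 1) x = (crease m (-(x + 2 ^ m))).map Neg.neg := by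
  have := natCast_two_pow m
  have := natCast_two_pow (m + 1)
  have : 2 ^ (m + 1) = 2 * 2 ^ m := pow_succ' 2 m
  have hlen : (SPF (m + 1)).length = 2 ^ (m + 1) - 1 := SPF_length (m + 1)
  rw [crease, SPF, List.append_assoc, List.getElem?_append_left (by rw [rPF_length]; omega), rPF,
    List.getElem?_reverse (by rw [List.length_map]; omega), List.getElem?_map, List.length_map,
    crease]
  congr 2
  omega

lemma crease_two_mul {m : ℕ} {x : ℤ} (h1 : -(2 ^ m) < x) (h2 : x < 2 ^ m) :
    crease (m + 1) (2 * x) = crease m x := by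
  induction m generalizing x with
  | zero =>
    obtain rfl : x = 0 := by simp only [pow_zero] at h1 h2; omega
    rw [mul_zero, crease_zero, crease_zero]
  | succ m ih =>
    have : (2 : ℤ) ^ (m + 1) = 2 * 2 ^ m := pow_succ' 2 m
    have : (2 : ℤ) ^ (m + 2) = 2 * 2 ^ (m + 1) := pow_succ' 2 (m + 1)
    rcases lt_trichotomy x 0 with hx | rfl | hx
    · rw [crease_succ_of_neg (by omega) (by omega), crease_succ_of_neg (by omega) hx,
        show -(2 * x + 2 ^ (m + 1)) = 2 * -(x + 2 ^ m) by ring, ih (by omega) (by omega)]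
    · rw [mul_zero, crease_zero, crease_zero]
    · rw [crease_succ_of_pos (by omega) (by omega), crease_succ_of_pos hx (by omega),
        show 2 * x - 2 ^ (m + 1) = 2 * (x - 2 ^ m) by ring, ih (by omega) (by omega)]

lemma crease_two_mul_add_one {m : ℕ} {x : ℤ} (h1 : -(2 ^ (m + 1)) ≤ x) (h2 : x < 2 ^ (m + 1)) :
    crease (m + 2) (2 * x + 1) = some (if Even x then -1 else 1) := by
  induction m generalizing x with
  | zero =>
    obtain rfl | rfl | rfl | rfl : x = -2 ∨ x = -1 ∨ x = 0 ∨ x = 1 := by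
      simp only [zero_add, pow_one] at h1 h2; omega
    all_goals decide
  | succ m ih =>
    have : (2 : ℤ) ^ (m + 1) = 2 * 2 ^ m := pow_succ' 2 m
    have : (2 : ℤ) ^ (m + 2) = 2 * 2 ^ (m + 1) := pow_succ' 2 (m + 1)
    have : (2 : ℤ) ^ (m + 3) = 2 * 2 ^ (m + 2) := pow_succ' 2 (m + 2)
    rcases le_or_gt 0 x with hx | hx
    · rw [crease_succ_of_pos (by omega) (by omega),
        show 2 * x + 1 - 2 ^ (m + 2) = 2 * (x - 2 ^ (m + 1)) + 1 by ring,
        ih (by omega) (by omega)]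
      have : Even (x - 2 ^ (m + 1)) ↔ Even x := by
        simp only [Int.even_iff]; omega
      simp only [this]
    · rw [crease_succ_of_neg (by omega) (by omega),
        show -(2 * x + 1 + 2 ^ (m + 2)) = 2 * (-x - 2 ^ (m + 1) - 1) + 1 by ring,
        ih (by omega) (by omega)]
      have : Even (-x - 2 ^ (m + 1) - 1) ↔ ¬Even x := by
        simp only [Int.even_iff]; omega
      by_cases hx : Even x <;> simp [this, hx]

def letter (s x : ℤ) : PFA :=
  if s = 1 then (if Even x then a00 else a01) else (if Even x then a10 else a11)

lemma nu1_letter_getElem?_zero (s x : ℤ) : (nu1 (letter s x))[0]? = some (letter s (2 * x)) := by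
  simp only [letter, even_two_mul, if_true]
  split_ifs <;> rfl

lemma nu1_letter_getElem?_one (s x : ℤ) :
    (nu1 (letter s x))[1]? = some (letter (if Even x then -1 else 1) (2 * x + 1)) := by
  have : ¬Even (2 * x + 1) := Int.not_even_iff_odd.mpr (odd_two_mul_add_one x)
  by_cases hx : Even x <;> by_cases hs : s = 1 <;> simp [letter, nu1, hx, hs, this]

lemma getElem?_flatten_map_mul_add {α β : Type*} (f : α → List β) {k : ℕ}
    (hf : ∀ a, (f a).length = k) (w : List α) (i : ℕ) {r : ℕ} (hr : r < k) :
    (w.map f).flatten[k * i + r]? = w[i]?.bind fun a => (f a)[r]? := by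
  induction w generalizing i with
  | nil => simp
  | cons a w ih =>
    rcases i with _ | i
    · simp [List.getElem?_append_left (hf a ▸ hr)]
    · rw [List.map_cons, List.flatten_cons, List.getElem?_append_right (by rw [hf]; nlinarith),
        hf, show k * (i + 1) + r - k = k * i + r by rw [Nat.mul_succ]; omega, ih]
      rfl

lemma nu1_length (a : PFA) : (nu1 a).length = 2 := by cases a <;> rfl

lemma nu1W_getElem?_two_mul_add (w : List PFA) (i : ℕ) {r : ℕ} (hr : r < 2) :
    (nu1W w)[2 * i + r]? = w[i]?.bind fun a => (nu1 a)[r]? :=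
  getElem?_flatten_map_mul_add nu1 nu1_length w i hr

lemma nu1Iter_succ_append (n : ℕ) (a b : PFA) :
    nu1Iter (n + 1) a ++ nu1Iter (n + 1) b = nu1W (nu1Iter n a ++ nu1Iter n b) := by
  simp [nu1Iter, nu1W]

lemma getElem?_nu1Iter_append {n : ℕ} {x : ℤ} (h1 : -(2 ^ n) ≤ x) (h2 : x < 2 ^ n) {s : ℤ}
    (hs : crease (n + 1) x = some s) :
    (nu1Iter n a11 ++ nu1Iter n a00)[(x + 2 ^ n).toNat]? = some (letter s x) := by
  induction n generalizing x s with
  | zero =>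
    obtain rfl | rfl : x = -1 ∨ x = 0 := by simp only [pow_zero] at h1 h2; omega
    all_goals
      simp only [crease, SPF, rPF] at hs
      cases hs
      decide
  | succ n ih =>
    have : (2 : ℤ) ^ (n + 1) = 2 * 2 ^ n := pow_succ' 2 n
    rw [nu1Iter_succ_append]
    obtain ⟨y, rfl | rfl⟩ := Int.even_or_odd' x
    · rw [crease_two_mul (by omega) (by omega)] at hs
      rw [show (2 * y + 2 ^ (n + 1)).toNat = 2 * (y + 2 ^ n).toNat + 0 by omega,
        nu1W_getElem?_two_mul_add _ _ two_pos, ih (by omega) (by omega) hs, Option.bind_some,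
        nu1_letter_getElem?_zero]
    · rw [crease_two_mul_add_one (by omega) (by omega), Option.some_inj] at hs
      obtain ⟨t, -, ht⟩ := exists_crease_eq_some (m := n + 1) (x := y) (by omega) (by omega)
      rw [show (2 * y + 1 + 2 ^ (n + 1)).toNat = 2 * (y + 2 ^ n).toNat + 1 by omega,
        nu1W_getElem?_two_mul_add _ _ one_lt_two, ih (by omega) (by omega) ht, Option.bind_some,
        nu1_letter_getElem?_one, hs]

/-- `ν1` generates the 1-dimensional paperfolding structures: for `n ≥ 0` and
`−2^n ≤ x < 2^n`, the letter at index `x + 2^n` of `ν1^n(a11 a00)` is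
`a_{ij}` where `i` is determined by the crease `s` of `S(n+2)` at position `x`
(`i = 0` if `s = +1`, `i = 1` if `s = −1`) and `j` by the parity of `x`
(`j = 0` if `x` is even, `j = 1` if `x` is odd). -/
theorem stmt11 (n : ℕ) (x : ℤ) (h1 : -(2 ^ n) ≤ x) (h2 : x < 2 ^ n) :
    ∃ s : ℤ, (s = 1 ∨ s = -1) ∧
      (SPF (n + 2))[(x + 2 ^ (n + 1) - 1).toNat]? = some s ∧
      (nu1Iter n PFA.a11 ++ nu1Iter n PFA.a00)[(x + 2 ^ n).toNat]? =
        some (if s = 1 then (if Even x then PFA.a00 else PFA.a01)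
              else (if Even x then PFA.a10 else PFA.a11)) := by
  have : (2 : ℤ) ^ (n + 1) = 2 * 2 ^ n := pow_succ' 2 n
  obtain ⟨s, hs, hcrease⟩ := exists_crease_eq_some (m := n + 1) (x := x) (by omega) (by omega)
  exact ⟨s, hs, hcrease, getElem?_nu1Iter_append h1 h2 hcrease⟩
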